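/- Let d ≥ 2 and let F : ℝ → ℝ be an increasing homeomorphism with F(x+1) = F(x) + d for all x and F(0) = 0, and suppose F is uniformly symmetric. Then the sequence of Markov partitions of F has bounded nearby geometry: there is C ≥ 1 such that for all n ≥ 0 and all m ∈ ℤ, C⁻¹ ≤ (F⁻ⁿ(m+1) − F⁻ⁿ(m))/(F⁻ⁿ(m+2) − F⁻ⁿ(m+1)) ≤ C. Consequently it has bounded geometry: there is C′ > 0 such that for all n ≥ 0 and all m ∈ ℤ, F⁻⁽ⁿ⁺¹⁾(m+1) − F⁻⁽ⁿ⁺¹⁾(m) ≥ C′ · (F⁻ⁿ(⌊m/d⌋+1) − F⁻ⁿ(⌊m/d⌋)). -/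
import Mathlib


open Filter

/-- `Finv F n` is the inverse of the `n`-th iterate `F^[n]`. -/
noncomputable def Finv (F : ℝ → ℝ) (n : ℕ) : ℝ → ℝ := Function.invFun (F^[n])

/-- Uniform symmetry of a lifted circle endomorphism. -/
def UnifSymm (F : ℝ → ℝ) : Prop :=
  ∃ ε : ℝ → ℝ, (∀ t : ℝ, 0 < t → 0 < ε t) ∧ (∃ B : ℝ, ∀ t : ℝ, 0 < t → ε t ≤ B) ∧
    Tendsto ε (nhdsWithin 0 (Set.Ioi 0)) (nhds 0) ∧
    ∀ x t : ℝ, 0 < t → ∀ n : ℕ, 1 ≤ n →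
      1 / (1 + ε t) ≤ (Finv F n (x + t) - Finv F n x) / (Finv F n x - Finv F n (x - t)) ∧
      (Finv F n (x + t) - Finv F n x) / (Finv F n x - Finv F n (x - t)) ≤ 1 + ε t

section Aux

variable {F : ℝ → ℝ}

lemma Finv_rightInv (hbij : Function.Bijective F) (n : ℕ) (x : ℝ) :
    F^[n] (Finv F n x) = x :=
  Function.invFun_eq ((hbij.iterate n).2 x)

lemma Finv_strictMono (hmono : StrictMono F) (hbij : Function.Bijective F) (n : ℕ) :
    StrictMono (Finv F n) := by
  intro a b hab
  by_contra h
  push_neg at h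
  have : b ≤ a := by
    calc b = F^[n] (Finv F n b) := (Finv_rightInv hbij n b).symm
      _ ≤ F^[n] (Finv F n a) := (hmono.iterate n).monotone h
      _ = a := Finv_rightInv hbij n a
  linarith

lemma Finv_zero (hbij : Function.Bijective F) (x : ℝ) : Finv F 0 x = x := by
  simpa using Finv_rightInv hbij 0 x

lemma Finv_succ (hbij : Function.Bijective F) (n : ℕ) (x : ℝ) :
    Finv F (n + 1) x = Finv F n (Finv F 1 x) := by
  apply (hbij.iterate (n + 1)).1
  rw [Finv_rightInv hbij (n + 1) x, Function.iterate_succ_apply',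
    Finv_rightInv hbij n (Finv F 1 x)]
  simpa using (Finv_rightInv hbij 1 x).symm

end Aux

/-- the Markov partitions of a uniformly symmetric circle
endomorphism have bounded nearby geometry, and consequently bounded
geometry. -/
theorem stmt_6 (d : ℕ) (hd : 2 ≤ d) (F : ℝ → ℝ)
    (hmono : StrictMono F) (hbij : Function.Bijective F)
    (hdeg : ∀ x : ℝ, F (x + 1) = F x + d) (hF0 : F 0 = 0)
    (husym : UnifSymm F) :
    (∃ C : ℝ, 1 ≤ C ∧ ∀ (n : ℕ) (m : ℤ),
      C⁻¹ ≤ (Finv F n ((m : ℝ) + 1) - Finv F n (m : ℝ)) /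
              (Finv F n ((m : ℝ) + 2) - Finv F n ((m : ℝ) + 1)) ∧
        (Finv F n ((m : ℝ) + 1) - Finv F n (m : ℝ)) /
            (Finv F n ((m : ℝ) + 2) - Finv F n ((m : ℝ) + 1)) ≤ C) ∧
    (∃ C' : ℝ, 0 < C' ∧ ∀ (n : ℕ) (m : ℤ),
      C' * (Finv F n ((Int.fdiv m d : ℝ) + 1) - Finv F n (Int.fdiv m d : ℝ)) ≤
        Finv F (n + 1) ((m : ℝ) + 1) - Finv F (n + 1) (m : ℝ)) := by
  obtain ⟨ε, hεpos, -, -, hε⟩ := husym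
  set C : ℝ := 1 + ε 1 with hCdef
  have hC1 : 1 ≤ C := by have := hεpos 1 one_pos; simp only [hCdef]; linarith
  have hC0 : 0 < C := lt_of_lt_of_le one_pos hC1
  have hCne : C ≠ 0 := ne_of_gt hC0
  have hFmono := Finv_strictMono hmono hbij
  -- bounded nearby geometry
  have key : ∀ (n : ℕ) (m : ℤ),
      C⁻¹ ≤ (Finv F n ((m : ℝ) + 1) - Finv F n (m : ℝ)) /
              (Finv F n ((m : ℝ) + 2) - Finv F n ((m : ℝ) + 1)) ∧
        (Finv F n ((m : ℝ) + 1) - Finv F n (m : ℝ)) /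
            (Finv F n ((m : ℝ) + 2) - Finv F n ((m : ℝ) + 1)) ≤ C := by
    intro n m
    rcases Nat.eq_zero_or_pos n with hn | hn
    · subst hn
      rw [Finv_zero hbij, Finv_zero hbij, Finv_zero hbij]
      have h1 : ((m : ℝ) + 1 - m) / ((m : ℝ) + 2 - (m + 1)) = 1 := by norm_num
      rw [h1]
      exact ⟨inv_le_one_of_one_le₀ hC1, hC1⟩
    · have h := hε ((m : ℝ) + 1) 1 one_pos n hn
      have e1 : (m : ℝ) + 1 + 1 = (m : ℝ) + 2 := by ring
      have e2 : (m : ℝ) + 1 - 1 = (m : ℝ) := by ring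
      rw [e1, e2] at h
      obtain ⟨h1, h2⟩ := h
      set A := Finv F n ((m : ℝ) + 1) - Finv F n (m : ℝ) with hA
      set Bv := Finv F n ((m : ℝ) + 2) - Finv F n ((m : ℝ) + 1) with hB
      have hApos : 0 < A := sub_pos.2 (hFmono n (by linarith))
      have hBpos : 0 < Bv := sub_pos.2 (hFmono n (by linarith))
      have h2' : Bv ≤ C * A := by
        rw [div_le_iff₀ hApos] at h2
        rw [hCdef]; linarith
      have h1' : C⁻¹ * A ≤ Bv := by
        rw [le_div_iff₀ hApos] at h1
        rw [hCdef, inv_eq_one_div]; linarith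
      constructor
      · rw [le_div_iff₀ hBpos]
        calc C⁻¹ * Bv ≤ C⁻¹ * (C * A) :=
              mul_le_mul_of_nonneg_left h2' (by positivity)
          _ = A := by rw [← mul_assoc, inv_mul_cancel₀ hCne, one_mul]
      · rw [div_le_iff₀ hBpos]
        calc A = C * (C⁻¹ * A) := by rw [← mul_assoc, mul_inv_cancel₀ hCne, one_mul]
          _ ≤ C * Bv := mul_le_mul_of_nonneg_left h1' (le_of_lt hC0)
  refine ⟨⟨C, hC1, key⟩, ?_⟩
  -- F at integers: F j = d * j
  have hFnat : ∀ p : ℕ, F (p : ℝ) = (d : ℝ) * p ∧ F (-(p : ℝ)) = -((d : ℝ) * p) := by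
    intro p
    induction p with
    | zero => simp [hF0]
    | succ p ih =>
        constructor
        · have h := hdeg (p : ℝ)
          push_cast
          rw [h, ih.1]; ring
        · have h := hdeg (-((p : ℝ) + 1))
          have e : -((p : ℝ) + 1) + 1 = -(p : ℝ) := by ring
          rw [e, ih.2] at h
          push_cast
          have : F (-((p : ℝ) + 1)) = -((d : ℝ) * p) - d := by linarith
          rw [this]; ring
  have hFint : ∀ j : ℤ, F (j : ℝ) = (d : ℝ) * j := by
    intro j
    obtain ⟨p, rfl | rfl⟩ := Int.eq_nat_or_neg j
    · push_cast; exact (hFnat p).1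
    · push_cast; rw [(hFnat p).2]; ring
  -- Finv 1 at multiples of d
  have hFinv1 : ∀ j : ℤ, Finv F 1 ((d : ℝ) * j) = (j : ℝ) := by
    intro j
    apply (hbij.iterate 1).1
    rw [Finv_rightInv hbij 1]
    simpa using (hFint j).symm
  -- bounded geometry
  refine ⟨((d : ℝ) * C ^ (d - 1))⁻¹, by positivity, ?_⟩
  intro n m
  set k : ℤ := Int.fdiv m (d : ℤ) with hk
  set L : ℤ → ℝ := fun a => Finv F (n + 1) ((a : ℝ) + 1) - Finv F (n + 1) (a : ℝ) with hL
  have hLpos : ∀ a : ℤ, 0 < L a := fun a => sub_pos.2 (hFmono (n + 1) (by linarith))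
  have hkey : ∀ a : ℤ, C⁻¹ ≤ L a / L (a + 1) ∧ L a / L (a + 1) ≤ C := by
    intro a
    have h := key (n + 1) a
    have e1 : ((a + 1 : ℤ) : ℝ) = (a : ℝ) + 1 := by push_cast; ring
    have e2 : (a : ℝ) + 1 + 1 = (a : ℝ) + 2 := by ring
    simp only [hL, e1, e2]
    exact h
  have hstep1 : ∀ a : ℤ, L a ≤ C * L (a + 1) := by
    intro a
    have h := (hkey a).2
    rwa [div_le_iff₀ (hLpos (a + 1))] at h
  have hstep2 : ∀ a : ℤ, L (a + 1) ≤ C * L a := by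
    intro a
    have h := (hkey a).1
    rw [le_div_iff₀ (hLpos (a + 1))] at h
    calc L (a + 1) = C * (C⁻¹ * L (a + 1)) := by
          rw [← mul_assoc, mul_inv_cancel₀ hCne, one_mul]
      _ ≤ C * L a := mul_le_mul_of_nonneg_left h (le_of_lt hC0)
  have hchain : ∀ p : ℕ, ∀ a : ℤ, L (a + p) ≤ C ^ p * L a ∧ L a ≤ C ^ p * L (a + p) := by
    intro p
    induction p with
    | zero => intro a; simp
    | succ p ih =>
        intro a
        have e : a + ((p + 1 : ℕ) : ℤ) = (a + 1) + (p : ℤ) := by push_cast; ring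
        constructor
        · calc L (a + ((p + 1 : ℕ) : ℤ)) = L ((a + 1) + (p : ℕ)) := by rw [e]
            _ ≤ C ^ p * L (a + 1) := (ih (a + 1)).1
            _ ≤ C ^ p * (C * L a) :=
                mul_le_mul_of_nonneg_left (hstep2 a) (by positivity)
            _ = C ^ (p + 1) * L a := by ring
        · calc L a ≤ C * L (a + 1) := hstep1 a
            _ ≤ C * (C ^ p * L ((a + 1) + (p : ℕ))) :=
                mul_le_mul_of_nonneg_left (ih (a + 1)).2 (le_of_lt hC0)
            _ = C ^ (p + 1) * L (a + ((p + 1 : ℕ) : ℤ)) := by rw [e]; ring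
  have hpowle : ∀ p : ℕ, p ≤ d - 1 → C ^ p ≤ C ^ (d - 1) := by
    intro p hp
    exact pow_le_pow_right₀ hC1 hp
  -- any two children of the same parent are comparable
  have hcomp : ∀ i i' : ℕ, i < d → i' < d →
      L ((d : ℤ) * k + (i' : ℤ)) ≤ C ^ (d - 1) * L ((d : ℤ) * k + (i : ℤ)) := by
    intro i i' hi hi'
    rcases le_total i i' with hii | hii
    · obtain ⟨p, rfl⟩ := Nat.exists_eq_add_of_le hii
      have hp : p ≤ d - 1 := by omega
      have e : (d : ℤ) * k + ((i + p : ℕ) : ℤ) = ((d : ℤ) * k + (i : ℤ)) + (p : ℤ) := by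
        push_cast; ring
      calc L ((d : ℤ) * k + ((i + p : ℕ) : ℤ))
          = L (((d : ℤ) * k + (i : ℤ)) + (p : ℕ)) := by rw [e]
        _ ≤ C ^ p * L ((d : ℤ) * k + (i : ℤ)) := (hchain p _).1
        _ ≤ C ^ (d - 1) * L ((d : ℤ) * k + (i : ℤ)) :=
            mul_le_mul_of_nonneg_right (hpowle p hp) (le_of_lt (hLpos _))
    · obtain ⟨p, rfl⟩ := Nat.exists_eq_add_of_le hii
      have hp : p ≤ d - 1 := by omega
      have e : (d : ℤ) * k + ((i' + p : ℕ) : ℤ) = ((d : ℤ) * k + (i' : ℤ)) + (p : ℤ) := by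
        push_cast; ring
      calc L ((d : ℤ) * k + (i' : ℤ))
          ≤ C ^ p * L (((d : ℤ) * k + (i' : ℤ)) + (p : ℕ)) := (hchain p _).2
        _ = C ^ p * L ((d : ℤ) * k + ((i' + p : ℕ) : ℤ)) := by rw [e]
        _ ≤ C ^ (d - 1) * L ((d : ℤ) * k + ((i' + p : ℕ) : ℤ)) :=
            mul_le_mul_of_nonneg_right (hpowle p hp) (le_of_lt (hLpos _))
  -- telescoping: the parent interval is the disjoint union of its d children
  set g : ℕ → ℝ := fun i => Finv F (n + 1) ((((d : ℤ) * k + (i : ℤ)) : ℤ) : ℝ) with hg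
  have htele : Finv F n ((k : ℝ) + 1) - Finv F n (k : ℝ) =
      ∑ i ∈ Finset.range d, L ((d : ℤ) * k + (i : ℤ)) := by
    have hterm : ∀ i : ℕ, L ((d : ℤ) * k + (i : ℤ)) = g (i + 1) - g i := by
      intro i
      simp only [hL, hg]
      have e : ((((d : ℤ) * k + ((i + 1 : ℕ) : ℤ)) : ℤ) : ℝ) =
          ((((d : ℤ) * k + (i : ℤ)) : ℤ) : ℝ) + 1 := by push_cast; ring
      rw [e]
    rw [Finset.sum_congr rfl (fun i _ => hterm i), Finset.sum_range_sub g d]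
    have hgd : g d = Finv F n ((k : ℝ) + 1) := by
      simp only [hg]
      have e : ((((d : ℤ) * k + ((d : ℕ) : ℤ)) : ℤ) : ℝ) = (d : ℝ) * ((k + 1 : ℤ) : ℝ) := by
        push_cast; ring
      rw [e, Finv_succ hbij, hFinv1 (k + 1)]
      push_cast; ring_nf
    have hg0 : g 0 = Finv F n (k : ℝ) := by
      simp only [hg]
      have e : ((((d : ℤ) * k + ((0 : ℕ) : ℤ)) : ℤ) : ℝ) = (d : ℝ) * ((k : ℤ) : ℝ) := by
        push_cast; ring
      rw [e, Finv_succ hbij, hFinv1 k]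
    rw [hgd, hg0]
  -- identify m as a child of the parent indexed by k
  have hd0 : (0 : ℤ) < (d : ℤ) := by exact_mod_cast Nat.lt_of_lt_of_le Nat.zero_lt_two hd
  have hkediv : k = m / (d : ℤ) := Int.fdiv_eq_ediv_of_nonneg m (le_of_lt hd0)
  have hmod1 : (0 : ℤ) ≤ m % (d : ℤ) := Int.emod_nonneg m (ne_of_gt hd0)
  have hmod2 : m % (d : ℤ) < (d : ℤ) := Int.emod_lt_of_pos m hd0
  have hdecomp : (d : ℤ) * k + m % (d : ℤ) = m := by
    rw [hkediv]; exact Int.mul_ediv_add_emod m (d : ℤ)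
  set j : ℕ := (m % (d : ℤ)).toNat with hj
  have hjd : j < d := by omega
  have hjm : (d : ℤ) * k + (j : ℤ) = m := by omega
  -- sum the comparisons
  have hsumle : Finv F n ((k : ℝ) + 1) - Finv F n (k : ℝ) ≤
      (d : ℝ) * C ^ (d - 1) * L m := by
    rw [htele]
    calc ∑ i ∈ Finset.range d, L ((d : ℤ) * k + (i : ℤ))
        ≤ ∑ _i ∈ Finset.range d, C ^ (d - 1) * L m := by
          apply Finset.sum_le_sum
          intro i hi
          have h := hcomp j i hjd (Finset.mem_range.1 hi)
          rwa [hjm] at h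
      _ = (d : ℝ) * C ^ (d - 1) * L m := by
          rw [Finset.sum_const, Finset.card_range, nsmul_eq_mul]; ring
  have hD : (0 : ℝ) < (d : ℝ) * C ^ (d - 1) := by positivity
  have hgoal : ((d : ℝ) * C ^ (d - 1))⁻¹ *
      (Finv F n ((k : ℝ) + 1) - Finv F n (k : ℝ)) ≤ L m := by
    have h := mul_le_mul_of_nonneg_left hsumle
      (le_of_lt (inv_pos.2 hD))
    rwa [← mul_assoc, inv_mul_cancel₀ (ne_of_gt hD), one_mul] at h
  simpa only [hL] using hgoal
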